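/- For a coinfinite primitive recursive set X, define X^{[-1]} by removing the least element of the complement of X (i.e., X^{[-1]}(n) = 1 if n is the least element not in X, and X^{[-1]}(n) = X(n) otherwise). Then R_{X^{[-1]}} <_pr R_X if and only if R_X <_pr Id. -/

import Mathlib

/-!
Always `R_{X^{[-1]}} ≤_pr R_X` (send the new point of `X^{[-1]}` into `X`) and `R_X ≤_pr Id`, so
both sides say that a reduction in the opposite direction fails, and both reductions turn out to
be equivalent to the existence of a primitive recursive `r` with `#(0^X)[r n] > n` for all `n`.

A reduction into `R_Y` maps pairwise inequivalent points to pairwise inequivalent points, at most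
one of which lies in `Y`. Applied to `Id ≤_pr R_X` this bounds the growth of `#(0^X)` from below
directly; applied to `R_X ≤_pr R_{X^{[-1]}}` it shows that `#(0^X)` strictly increases between `n`
and a primitive recursive `q n`, and iterating `q` gives `r`. Conversely, given `r`, the `n`-th
element of `Xᶜ` is a primitive recursive injection into the singleton classes, so `Id ≤_pr R_X`;
the same holds for `X^{[-1]}`, whence `R_X ≤_pr Id ≤_pr R_{X^{[-1]}}`.
-/

/-- The equivalence relation `R_X`: `x R_X y` iff both in `X` or `x = y`. -/
def REq (X : Set ℕ) (x y : ℕ) : Prop := (x ∈ X ∧ y ∈ X) ∨ x = y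

/-- Primitive recursive reducibility between binary relations on ℕ. -/
def PrRed (R S : ℕ → ℕ → Prop) : Prop :=
  ∃ f : ℕ → ℕ, Primrec f ∧ ∀ x y, R x y ↔ S (f x) (f y)

/-- pr-bireducibility. -/
def PrEquiv (R S : ℕ → ℕ → Prop) : Prop := PrRed R S ∧ PrRed S R

/-- `X` is a primitive recursive set. -/
def PRSet (X : Set ℕ) : Prop :=
  ∃ f : ℕ → Bool, Primrec f ∧ ∀ n, n ∈ X ↔ f n = true

/-- `#(0^X)[s]`: the number of elements of the complement of `X` that are `≤ s`. -/
noncomputable def zc (X : Set ℕ) (s : ℕ) : ℕ := {k | k ≤ s ∧ k ∉ X}.ncard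

/-- `X^{[-1]}`: add the least element of the complement of `X` into `X`. -/
noncomputable def remOne (X : Set ℕ) : Set ℕ := insert (sInf Xᶜ) X

open Finset

namespace Primrec

theorem nat_count {p : ℕ → Prop} [DecidablePred p] (hp : PrimrecPred p) :
    Primrec (Nat.count p) :=
  (list_length.comp ((listFilter hp).comp list_range)).of_eq fun n => by
    simp [Nat.count, List.countP_eq_length_filter]

theorem finset_range_sup {g : ℕ → ℕ} (hg : Primrec g) : Primrec fun n => (range n).sup g :=
  (nat_rec₁ 0 (nat_max.comp₂ Primrec₂.right (hg.comp fst).to₂)).of_eq fun n => by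
    induction n with
    | zero => rfl
    | succ n ih => simp [range_add_one, ← ih, max_comm]

/-- By the Galois connection between `Nat.count p` and `Nat.nth p`, `Nat.nth p n` is the
greatest `k ≤ b n` with `Nat.count p k ≤ n`. -/
theorem nat_nth {p : ℕ → Prop} [DecidablePred p] (hp : PrimrecPred p)
    (hinf : (Set.ofPred p).Infinite) {b : ℕ → ℕ} (hb : Primrec b)
    (hpb : ∀ n, n < Nat.count p (b n)) : Primrec (Nat.nth p) := by
  have hrel : PrimrecRel fun n k => Nat.count p k ≤ n :=
    nat_le.comp ((nat_count hp).comp snd) fst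
  refine (nat_findGreatest hb hrel).of_eq fun n => ?_
  have hle : Nat.nth p n ≤ b n := (Nat.nth_lt_of_lt_count (hpb n)).le
  have hcount : Nat.count p (Nat.nth p n) ≤ n := (Nat.count_le_iff_le_nth hinf).2 le_rfl
  refine le_antisymm ?_ (Nat.le_findGreatest hle hcount)
  exact (Nat.count_le_iff_le_nth hinf).1
    (Nat.findGreatest_spec (P := fun k => Nat.count p k ≤ n) hle hcount)

end Primrec

theorem PrRed.trans {R S T : ℕ → ℕ → Prop} (hRS : PrRed R S) (hST : PrRed S T) : PrRed R T := by
  obtain ⟨f, hf, hfRS⟩ := hRS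
  obtain ⟨g, hg, hgST⟩ := hST
  exact ⟨g ∘ f, hg.comp hf, fun x y => (hfRS x y).trans (hgST (f x) (f y))⟩

theorem prRed_REq_insert (X : Set ℕ) (a : ℕ) : PrRed (REq (insert a X)) (REq X) := by
  rcases X.eq_empty_or_nonempty with rfl | ⟨x₀, hx₀⟩
  · refine ⟨id, .id, fun x y => ?_⟩
    simp only [REq, Set.mem_insert_iff, Set.mem_empty_iff_false, or_false, false_and, false_or,
      id_eq]
    exact ⟨fun h => h.elim (fun ⟨hx, hy⟩ => hx.trans hy.symm) id, Or.inr⟩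
  · refine ⟨fun x => if x = a then x₀ else x, .ite (Primrec.eq.comp .id (.const a)) (.const x₀) .id,
      fun x y => ?_⟩
    by_cases hx : x = a <;> by_cases hy : y = a <;> simp [REq, hx, hy, hx₀] <;> aesop

namespace PRSet

variable {X : Set ℕ}

theorem primrecPred_notMem (hX : PRSet X) : PrimrecPred (· ∉ X) := by
  obtain ⟨f, hf, hfX⟩ := hX
  have : PrimrecPred fun n => f n = false :=
    Primrec.primrecPred ((Primrec.not.comp hf).of_eq fun n => by cases f n <;> rfl)
  exact this.of_eq fun n => by simp [hfX]

theorem insert (hX : PRSet X) (a : ℕ) : PRSet (insert a X) := by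
  obtain ⟨f, hf, hfX⟩ := hX
  exact ⟨fun n => f n || n == a, Primrec.or.comp hf (Primrec.beq.comp .id (.const a)),
    fun n => by simp [hfX, or_comm]⟩

theorem prRed_REq_eq (hX : PRSet X) : PrRed (REq X) (· = ·) := by
  obtain ⟨f, hf, hfX⟩ := hX
  refine ⟨fun x => bif f x then 0 else x + 1, .cond hf (.const 0) .succ, fun x y => ?_⟩
  cases hx : f x <;> cases hy : f y <;> simp [REq, hfX, hx, hy] <;> rintro rfl <;> simp_all

end PRSet

theorem zc_eq_count (X : Set ℕ) [DecidablePred (· ∉ X)] (t : ℕ) :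
    zc X t = Nat.count (· ∉ X) (t + 1) := by
  rw [zc, Nat.count_eq_card_filter_range, ← Set.ncard_coe_finset]
  congr 1
  ext k
  simp

section Coinfinite

variable {X : Set ℕ}

theorem zc_mono : Monotone (zc X) := fun s t hst => by
  classical
  simp only [zc_eq_count]
  exact Nat.count_monotone _ (by omega)

theorem zc_insert {a t : ℕ} (ha : a ∉ X) (hat : a ≤ t) : zc X t = zc (insert a X) t + 1 := by
  classical
  simp only [zc_eq_count, Nat.count_eq_card_filter_range]
  rw [← card_insert_of_notMem (a := a) (by simp)]
  congr 1
  ext k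
  by_cases hk : k = a <;> simp [hk, ha, Nat.lt_succ_iff.2 hat]

theorem card_le_zc_add_one {S : Finset ℕ} (hS : (S : Set ℕ).Pairwise fun x y => ¬REq X x y)
    {t : ℕ} (ht : ∀ x ∈ S, x ≤ t) : #S ≤ zc X t + 1 := by
  classical
  have hin : #(S.filter (· ∈ X)) ≤ 1 := card_le_one.2 fun x hx y hy => by
    rw [mem_filter] at hx hy
    by_contra hxy
    exact hS hx.1 hy.1 hxy (Or.inl ⟨hx.2, hy.2⟩)
  have hout : #(S.filter (· ∉ X)) ≤ zc X t := by
    rw [zc_eq_count, Nat.count_eq_card_filter_range]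
    refine card_le_card fun x hx => ?_
    rw [mem_filter] at hx ⊢
    exact ⟨mem_range.2 (Nat.lt_succ_of_le (ht x hx.1)), hx.2⟩
  have := card_filter_add_card_filter_not (s := S) (p := (· ∈ X))
  omega

theorem card_le_zc_add_one_of_reduces {R : ℕ → ℕ → Prop} {f : ℕ → ℕ}
    (hf : ∀ x y, R x y ↔ REq X (f x) (f y)) {T : Finset ℕ}
    (hT : (T : Set ℕ).Pairwise fun x y => ¬R x y) {t : ℕ} (ht : ∀ x ∈ T, f x ≤ t) :
    #T ≤ zc X t + 1 := by
  classical
  have hinj : Set.InjOn f T := fun x hx y hy hxy =>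
    by_contra fun hne => hT hx hy hne ((hf x y).2 (Or.inr hxy))
  rw [← card_image_of_injOn hinj]
  refine card_le_zc_add_one ?_ (forall_mem_image.2 ht)
  rw [coe_image, hinj.pairwise_image]
  exact hT.imp fun x y h => by rwa [hf] at h

def PrCoinfinite (X : Set ℕ) : Prop :=
  ∃ r : ℕ → ℕ, Primrec r ∧ ∀ n, n < zc X (r n)

namespace PrCoinfinite

protected theorem insert (h : PrCoinfinite X) {a : ℕ} (ha : a ∉ X) :
    PrCoinfinite (insert a X) := by
  obtain ⟨r, hr, hrX⟩ := h
  refine ⟨fun n => r (n + 1) + a, Primrec.nat_add.comp (hr.comp .succ) (.const a), fun n => ?_⟩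
  beta_reduce
  have := zc_mono (X := X) (Nat.le_add_right (r (n + 1)) a)
  have := zc_insert ha (Nat.le_add_left a (r (n + 1)))
  have := hrX (n + 1)
  omega

theorem of_zc_lt_zc {q : ℕ → ℕ} (hq : Primrec q) (h : ∀ n, zc X n < zc X (q n)) :
    PrCoinfinite X := by
  refine ⟨fun n => q^[n + 1] 0, Primrec.nat_iterate .succ (.const 0) (hq.comp .snd).to₂,
    fun n => ?_⟩
  beta_reduce
  induction n with
  | zero => exact (h 0).trans_le' (Nat.zero_le _)
  | succ n ih =>
    rw [Function.iterate_succ_apply']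
    exact (Nat.succ_le_of_lt ih).trans_lt (h _)

theorem of_prRed_eq_REq (h : PrRed (· = ·) (REq X)) : PrCoinfinite X := by
  obtain ⟨f, hf, hfX⟩ := h
  refine ⟨fun n => (range (n + 2)).sup f,
    (Primrec.finset_range_sup hf).comp (Primrec.succ.comp .succ), fun n => ?_⟩
  beta_reduce
  have := card_le_zc_add_one_of_reduces hfX (T := range (n + 2)) (fun _ _ _ _ => id)
    fun x hx => le_sup hx
  rw [card_range] at this
  omega

theorem prRed_eq_REq (hX : PRSet X) (hXc : Xᶜ.Infinite) (h : PrCoinfinite X) :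
    PrRed (· = ·) (REq X) := by
  classical
  obtain ⟨r, hr, hrX⟩ := h
  have hcount (n : ℕ) : n < Nat.count (· ∉ X) (r n + 1) := zc_eq_count X (r n) ▸ hrX n
  refine ⟨Nat.nth (· ∉ X), Primrec.nat_nth hX.primrecPred_notMem hXc (Primrec.succ.comp hr) hcount,
    fun x y => ?_⟩
  have hnth := Nat.nth_mem_of_infinite (p := (· ∉ X)) hXc
  simp [REq, hnth, (Nat.nth_injective hXc).eq_iff]

/-- The `zc X n + 1` pairwise `REq X`-inequivalent points `x₀ ∈ X` and `x ∉ X` with `x ≤ n` are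
sent to pairwise `REq (insert a X)`-inequivalent points; all but one of them lie outside
`insert a X`, and `a` is one more point outside `X`. -/
theorem of_prRed_REq_insert {a : ℕ} (ha : a ∉ X) (h : PrRed (REq X) (REq (insert a X))) :
    PrCoinfinite X := by
  classical
  rcases X.eq_empty_or_nonempty with rfl | ⟨x₀, hx₀⟩
  · exact ⟨id, .id, fun n => by simp [zc_eq_count]⟩
  obtain ⟨g, hg, hgX⟩ := h
  refine of_zc_lt_zc (q := fun n => g x₀ + (range (n + 1)).sup g + a)
    (Primrec.nat_add.comp (Primrec.nat_add.comp (.const _)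
      ((Primrec.finset_range_sup hg).comp .succ)) (.const a)) fun n => ?_
  set T := insert x₀ ((range (n + 1)).filter (· ∉ X))
  have hT : #T = zc X n + 1 := by
    rw [card_insert_of_notMem (by simp [hx₀]), zc_eq_count, Nat.count_eq_card_filter_range]
  have hTpair : (T : Set ℕ).Pairwise fun x y => ¬REq X x y := by
    intro x hx y hy hxy hxyX
    simp only [T, coe_insert, coe_filter, Set.mem_insert_iff, Set.mem_ofPred_eq] at hx hy
    rcases hxyX with ⟨hxX, hyX⟩ | rfl
    · grind
    · exact hxy rfl
  have hbound : ∀ x ∈ T, g x ≤ g x₀ + (range (n + 1)).sup g + a := by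
    intro x hx
    rcases mem_insert.1 hx with rfl | hx
    · omega
    · have := le_sup (f := g) (mem_filter.1 hx).1
      omega
  have := card_le_zc_add_one_of_reduces hgX hTpair hbound
  have := zc_insert ha (Nat.le_add_left a (g x₀ + (range (n + 1)).sup g))
  omega

end PrCoinfinite

end Coinfinite

theorem prRed_eq_REq_iff {X : Set ℕ} (hX : PRSet X) (hXc : Xᶜ.Infinite) :
    PrRed (· = ·) (REq X) ↔ PrCoinfinite X :=
  ⟨.of_prRed_eq_REq, (·.prRed_eq_REq hX hXc)⟩

theorem prRed_REq_remOne_iff {X : Set ℕ} (hX : PRSet X) (hXc : Xᶜ.Infinite) :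
    PrRed (REq X) (REq (remOne X)) ↔ PrCoinfinite X := by
  have hm : sInf Xᶜ ∉ X := Nat.sInf_mem hXc.nonempty
  have hXc' : (remOne X)ᶜ.Infinite :=
    (hXc.sdiff (Set.finite_singleton (sInf Xᶜ))).mono fun x hx => by
      simp_all [remOne]
  refine ⟨PrCoinfinite.of_prRed_REq_insert hm, fun h => hX.prRed_REq_eq.trans ?_⟩
  exact (h.insert hm).prRed_eq_REq (hX.insert _) hXc'

theorem stmt_18 (X : Set ℕ) (hX : PRSet X) (hXc : Xᶜ.Infinite) :
    (PrRed (REq (remOne X)) (REq X) ∧ ¬ PrRed (REq X) (REq (remOne X))) ↔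
    (PrRed (REq X) (fun a b : ℕ => a = b) ∧
      ¬ PrRed (fun a b : ℕ => a = b) (REq X)) := by
  rw [prRed_REq_remOne_iff hX hXc, prRed_eq_REq_iff hX hXc]
  simp only [prRed_REq_insert X, hX.prRed_REq_eq, remOne, true_and]
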